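/- arXiv:1805.05255 — 2 statements merged into one kernel-verified Lean document; each statement's English description precedes it below -/
import Mathlib

section
/- For every n ≥ 1 and every partition μ of n (written with parts μ_1 ≥ … ≥ μ_n ≥ 0 padded with zeros to length n), the alternant satisfies A_μ = (−1)^{n(n−1)/2} · V · det M in ℤ[x_1,…,x_n], where M is the n×n matrix whose (i,j) entry (1 ≤ i,j ≤ n) is the complete homogeneous symmetric polynomial h_{μ_j + n − j − i + 1} in x_1,…,x_n. -/
open MvPolynomial

/-- The parts of a partition of `n`, sorted into decreasing order and padded with
zeros to a sequence of length `n`: `paddedPart n μ i` is `μ_{i+1}`. -/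
def paddedPart (n : ℕ) (μ : Nat.Partition n) (i : Fin n) : ℕ :=
  ((μ.parts.sort (· ≤ ·)).reverse).getD i 0

/-- The Vandermonde product `∏_{i<j} (x_i - x_j)` in `ℤ[x_1, …, x_n]`. -/
noncomputable def vandermondeProd (n : ℕ) : MvPolynomial (Fin n) ℤ :=
  ∏ p ∈ Finset.univ.filter (fun p : Fin n × Fin n => p.1 < p.2), (X p.1 - X p.2)

/-- The alternant `A_μ = Σ_{σ ∈ S_n} sgn(σ) ∏_i x_{σ(i)}^{μ_i + n - i}` (with `i` running
from `1` to `n`), in `ℤ[x_1, …, x_n]`. -/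
noncomputable def alternant (n : ℕ) (μ : Nat.Partition n) : MvPolynomial (Fin n) ℤ :=
  ∑ σ : Equiv.Perm (Fin n),
    (Equiv.Perm.sign σ : ℤ) • ∏ i : Fin n, X (σ i) ^ (paddedPart n μ i + (n - 1 - (i : ℕ)))

/-- `λ` is strictly greater than `μ` in the lexicographic order on partitions of `n`
(compared through their padded decreasing part sequences). -/
def LexGT (n : ℕ) (l μ : Nat.Partition n) : Prop :=
  ∃ k : Fin n, (∀ j : Fin n, j < k → paddedPart n l j = paddedPart n μ j) ∧
    paddedPart n μ k < paddedPart n l k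

/-- The complete homogeneous symmetric polynomial `h_k` in `ℤ[x_1, …, x_n]`, indexed by an
integer `k`, with the conventions `h_0 = 1` and `h_k = 0` for `k < 0`. -/
noncomputable def hInt (n : ℕ) (k : ℤ) : MvPolynomial (Fin n) ℤ :=
  if 0 ≤ k then hsymm (Fin n) ℤ k.toNat else 0

/-!
Write `m_j = μ_j + n - 1 - j`, so that `A_μ = det (x_i ^ m_j)`. The generating-function identity
`∏_{l ≠ i} (1 - x_l T) · ∏_l (1 - x_l T)⁻¹ = (1 - x_i T)⁻¹` gives, coefficientwise,
`x_i ^ m = ∑_k c_{ik} h_{m - k}` with `c_{ik}` the coefficient of `T^k` in `∏_{l ≠ i} (1 - x_l T)`.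
Hence `(x_i ^ m_j) = C · (h_{m_j - k})` for a matrix `C` independent of `μ`. For `m_j = j` the left
side is the Vandermonde matrix and `(h_{j - k})` is unitriangular, so
`det C = ∏_{i < j} (x_j - x_i) = (-1)^(n(n-1)/2) V`.
-/

open Finset

lemma Finset.sym_succ_insert {α : Type*} [DecidableEq α] {a : α} {s : Finset α} (ha : a ∉ s)
    (m : ℕ) :
    (insert a s).sym (m + 1) = ((insert a s).sym m).image (Sym.cons a) ∪ s.sym (m + 1) := by
  ext x
  simp only [mem_union, mem_image, mem_sym_iff]
  constructor
  · intro hx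
    by_cases hax : a ∈ x
    · obtain ⟨y, rfl⟩ := Sym.exists_cons_of_mem hax
      exact .inl ⟨y, fun b hb => hx b (Sym.mem_cons_of_mem hb), rfl⟩
    · refine .inr fun b hb => ?_
      rcases mem_insert.1 (hx b hb) with rfl | hbs
      · exact absurd hb hax
      · exact hbs
  · rintro (⟨y, hy, rfl⟩ | hx) b hb
    · rcases Sym.mem_cons.1 hb with rfl | hb
      · exact mem_insert_self _ _
      · exact hy b hb
    · exact mem_insert_of_mem (hx b hb)

lemma PowerSeries.coeff_coe_mul_mk_eq_sum_range {R : Type*} [CommSemiring R] {p : Polynomial R}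
    {N : ℕ} (hp : p.natDegree < N) {g : ℤ → R} (hg : ∀ z < 0, g z = 0) (m : ℕ) :
    coeff m ((p : PowerSeries R) * mk fun k => g k) = ∑ k ∈ range N, p.coeff k * g (m - k) := by
  rw [coeff_mul, Finset.Nat.sum_antidiagonal_eq_sum_range_succ
    (fun i j => coeff i (p : PowerSeries R) * coeff j (mk fun k => g k))]
  simp only [Polynomial.coeff_coe, coeff_mk]
  have hcast : ∀ k ∈ range (m + 1), p.coeff k * g ((m - k : ℕ) : ℤ) = p.coeff k * g (m - k) := by
    intro k hk
    rw [Nat.cast_sub (Nat.lt_succ_iff.1 (mem_range.1 hk))]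
  rw [sum_congr rfl hcast, sum_subset (range_subset_range.2 (le_max_left (m + 1) N)),
    ← sum_subset (range_subset_range.2 (le_max_right (m + 1) N))]
  · intro k _ hk
    rw [Polynomial.coeff_eq_zero_of_natDegree_lt (hp.trans_le (by simpa using hk)), zero_mul]
  · intro k _ hk
    rw [hg _ (by rw [mem_range] at hk; omega), mul_zero]

lemma prod_filter_lt_eq_prod_prod_Ioi {ι M : Type*} [Fintype ι] [LinearOrder ι]
    [LocallyFiniteOrderTop ι] [CommMonoid M] (f : ι → ι → M) :
    ∏ p ∈ univ.filter (fun p : ι × ι => p.1 < p.2), f p.1 p.2 = ∏ i, ∏ j ∈ Ioi i, f i j := by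
  simp_rw [prod_filter, Fintype.prod_prod_type, ← filter_lt_eq_Ioi, prod_filter]

lemma Fin.sum_card_Ioi (n : ℕ) : ∑ i : Fin n, #(Ioi i) = n * (n - 1) / 2 := by
  simp_rw [Fin.card_Ioi]
  rw [Fin.sum_univ_eq_sum_range (fun i => n - 1 - i), sum_range_reflect (fun i => i), sum_range_id]

lemma Fin.prod_prod_Ioi_sub {R : Type*} [CommRing R] {n : ℕ} (v : Fin n → R) :
    ∏ i, ∏ j ∈ Ioi i, (v j - v i) =
      (-1) ^ (n * (n - 1) / 2) *
        ∏ p ∈ univ.filter (fun p : Fin n × Fin n => p.1 < p.2), (v p.1 - v p.2) := by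
  rw [prod_filter_lt_eq_prod_prod_Ioi (fun i j => v i - v j), ← Fin.sum_card_Ioi,
    ← prod_pow_eq_pow_sum, ← prod_mul_distrib]
  refine prod_congr rfl fun i _ => ?_
  simp_rw [← prod_neg, neg_sub]

section SignedESymm

variable {σ R : Type*} [CommRing R]

/-- `∏_{l ∈ t} (1 - x_l T) = ∑_k (-1)^k e_k(x_l : l ∈ t) T^k`. -/
noncomputable def signedESymmPoly (t : Finset σ) : Polynomial (MvPolynomial σ R) :=
  ∏ l ∈ t, (1 - Polynomial.C (X l) * Polynomial.X)

lemma natDegree_signedESymmPoly_le (t : Finset σ) :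
    (signedESymmPoly t : Polynomial (MvPolynomial σ R)).natDegree ≤ #t := by
  refine (Polynomial.natDegree_prod_le _ _).trans
    ((sum_le_sum fun l _ => ?_).trans (card_eq_sum_ones t).ge)
  exact (Polynomial.natDegree_sub_le _ _).trans
    (by simpa using (Polynomial.natDegree_C_mul_le _ _).trans Polynomial.natDegree_X_le)

end SignedESymm

section CompleteHomogeneous

variable {σ R : Type*} [DecidableEq σ]

noncomputable def hsymmOn [CommSemiring R] (s : Finset σ) (m : ℕ) : MvPolynomial σ R :=
  ∑ x ∈ s.sym m, (x.1.map X).prod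

section Semiring

variable [CommSemiring R]

lemma hsymmOn_zero (s : Finset σ) : hsymmOn s 0 = (1 : MvPolynomial σ R) := by
  rw [hsymmOn, sym_zero, sum_singleton]
  rfl

lemma hsymmOn_univ [Fintype σ] (m : ℕ) : hsymmOn univ m = hsymm σ R m := by
  rw [hsymmOn, sym_univ]
  rfl

lemma hsymmOn_singleton (a : σ) (m : ℕ) : hsymmOn {a} m = (X a : MvPolynomial σ R) ^ m := by
  simp [hsymmOn, sym_singleton, Sym.val_eq_coe, Sym.coe_replicate]

lemma hsymmOn_insert_succ {a : σ} {s : Finset σ} (ha : a ∉ s) (m : ℕ) :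
    hsymmOn (insert a s) (m + 1) =
      (X a : MvPolynomial σ R) * hsymmOn (insert a s) m + hsymmOn s (m + 1) := by
  have hdisj : Disjoint (((insert a s).sym m).image (Sym.cons a)) (s.sym (m + 1)) := by
    refine disjoint_left.2 fun x hx hx' => ?_
    obtain ⟨y, -, rfl⟩ := mem_image.1 hx
    exact ha (mem_sym_iff.1 hx' a (Sym.mem_cons_self a y))
  rw [hsymmOn, sym_succ_insert ha, sum_union hdisj,
    sum_image fun y _ y' _ h => (Sym.cons_inj_right a y y').1 h, hsymmOn, mul_sum]
  congr 1
  refine sum_congr rfl fun y _ => ?_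
  rw [Sym.cons, Multiset.map_cons, Multiset.prod_cons]

end Semiring

variable [CommRing R]

noncomputable def hsymmSeries (s : Finset σ) : PowerSeries (MvPolynomial σ R) :=
  PowerSeries.mk (hsymmOn s)

lemma one_sub_X_mul_hsymmSeries_insert {a : σ} {s : Finset σ} (ha : a ∉ s) :
    (1 - PowerSeries.C (X a) * PowerSeries.X) * hsymmSeries (insert a s) =
      (hsymmSeries s : PowerSeries (MvPolynomial σ R)) := by
  refine PowerSeries.ext fun m => ?_
  rcases m with _ | m
  · simp [hsymmSeries, hsymmOn_zero]
  · rw [sub_mul, one_mul, mul_assoc, map_sub, PowerSeries.coeff_C_mul,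
      PowerSeries.coeff_succ_X_mul]
    simp only [hsymmSeries, PowerSeries.coeff_mk, hsymmOn_insert_succ ha]
    abel

lemma signedESymmPoly_mul_hsymmSeries {t s : Finset σ} (hts : Disjoint t s) :
    ((signedESymmPoly t : Polynomial (MvPolynomial σ R)) : PowerSeries (MvPolynomial σ R)) *
      hsymmSeries (t ∪ s) = hsymmSeries s := by
  induction t using Finset.induction_on with
  | empty => simp [signedESymmPoly]
  | @insert a t ha ih =>
    rw [disjoint_insert_left] at hts
    have hat : a ∉ t ∪ s := by simp [ha, hts.1]
    have hcoe : ((1 - Polynomial.C (X a) * Polynomial.X : Polynomial (MvPolynomial σ R)) :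
        PowerSeries (MvPolynomial σ R)) = 1 - PowerSeries.C (X a) * PowerSeries.X := by simp
    rw [signedESymmPoly, prod_insert ha, Polynomial.coe_mul, hcoe, insert_union, mul_assoc,
      mul_left_comm,
      one_sub_X_mul_hsymmSeries_insert hat]
    exact ih hts.2

end CompleteHomogeneous

section JacobiTrudi

variable {n : ℕ}

lemma hInt_neg {z : ℤ} (hz : z < 0) : hInt n z = 0 := if_neg hz.not_ge

lemma hsymmSeries_univ :
    hsymmSeries (univ : Finset (Fin n)) = PowerSeries.mk fun k => hInt n k := by
  ext1 k
  simp [hsymmSeries, hInt, hsymmOn_univ]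

lemma X_pow_eq_sum_coeff_mul_hInt (i : Fin n) (m : ℕ) :
    (X i : MvPolynomial (Fin n) ℤ) ^ m =
      ∑ k : Fin n, (signedESymmPoly (univ.erase i)).coeff k * hInt n (m - k) := by
  have hdeg :
      (signedESymmPoly (univ.erase i) : Polynomial (MvPolynomial (Fin n) ℤ)).natDegree < n :=
    (natDegree_signedESymmPoly_le _).trans_lt (by simpa using i.pos)
  rw [Fin.sum_univ_eq_sum_range
      (fun k => (signedESymmPoly (univ.erase i)).coeff k * hInt n (m - k)),
    ← PowerSeries.coeff_coe_mul_mk_eq_sum_range hdeg (fun _ => hInt_neg), ← hsymmSeries_univ,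
    show hsymmSeries univ = hsymmSeries (univ.erase i ∪ {i}) by simp,
    signedESymmPoly_mul_hsymmSeries (disjoint_singleton_right.2 (notMem_erase i univ)),
    hsymmSeries, PowerSeries.coeff_mk, hsymmOn_singleton]

noncomputable def signedESymmMatrix (n : ℕ) : Matrix (Fin n) (Fin n) (MvPolynomial (Fin n) ℤ) :=
  Matrix.of fun i k => (signedESymmPoly (univ.erase i)).coeff k

noncomputable def hIntMatrix (m : Fin n → ℕ) : Matrix (Fin n) (Fin n) (MvPolynomial (Fin n) ℤ) :=
  Matrix.of fun i j => hInt n ((m j : ℤ) - i)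

lemma of_X_pow_eq_signedESymmMatrix_mul (m : Fin n → ℕ) :
    Matrix.of (fun i j => (X i : MvPolynomial (Fin n) ℤ) ^ m j) =
      signedESymmMatrix n * hIntMatrix m := by
  ext i j : 1
  simp [Matrix.mul_apply, signedESymmMatrix, hIntMatrix, X_pow_eq_sum_coeff_mul_hInt i (m j)]

lemma det_hIntMatrix_val : (hIntMatrix (Fin.val (n := n))).det = 1 := by
  rw [Matrix.det_of_isUpperTriangular (M := hIntMatrix Fin.val)
    fun i j hji => hInt_neg (by simpa using hji)]
  simp [hIntMatrix, hInt]

lemma det_signedESymmMatrix :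
    (signedESymmMatrix n).det = ∏ i : Fin n, ∏ j ∈ Ioi i, (X j - X i) := by
  rw [← Matrix.det_vandermonde, ← mul_one (signedESymmMatrix n).det, ← det_hIntMatrix_val,
    ← Matrix.det_mul, ← of_X_pow_eq_signedESymmMatrix_mul]
  rfl

lemma alternant_eq_det (μ : Nat.Partition n) :
    alternant n μ = (Matrix.of fun i j : Fin n =>
      (X i : MvPolynomial (Fin n) ℤ) ^ (paddedPart n μ j + (n - 1 - (j : ℕ)))).det := by
  simp [alternant, Matrix.det_apply, Units.smul_def]

end JacobiTrudi

theorem stmt_2_general (n : ℕ) (μ : Nat.Partition n) :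
    alternant n μ =
      (-1 : MvPolynomial (Fin n) ℤ) ^ (n * (n - 1) / 2) * vandermondeProd n *
        Matrix.det (Matrix.of fun i j : Fin n =>
          hInt n ((paddedPart n μ j : ℤ) + (n : ℤ) - ((j : ℕ) + 1 : ℕ) - ((i : ℕ) + 1 : ℕ) + 1)) := by
  have hM : (Matrix.of fun i j : Fin n =>
      hInt n ((paddedPart n μ j : ℤ) + (n : ℤ) - ((j : ℕ) + 1 : ℕ) - ((i : ℕ) + 1 : ℕ) + 1)) =
      hIntMatrix fun j => paddedPart n μ j + (n - 1 - (j : ℕ)) := by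
    refine Matrix.ext fun i j => ?_
    simp only [hIntMatrix, Matrix.of_apply]
    congr 1
    have := j.isLt
    push_cast [Nat.sub_sub, Nat.cast_sub (show 1 + (j : ℕ) ≤ n by omega)]
    ring
  rw [alternant_eq_det, of_X_pow_eq_signedESymmMatrix_mul, Matrix.det_mul, det_signedESymmMatrix,
    Fin.prod_prod_Ioi_sub, hM]
  rfl

theorem stmt_2 (n : ℕ) (hn : 1 ≤ n) (μ : Nat.Partition n) :
    alternant n μ =
      (-1 : MvPolynomial (Fin n) ℤ) ^ (n * (n - 1) / 2) * vandermondeProd n *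
        Matrix.det (Matrix.of fun i j : Fin n =>
          hInt n ((paddedPart n μ j : ℤ) + (n : ℤ) - ((j : ℕ) + 1 : ℕ) - ((i : ℕ) + 1 : ℕ) + 1)) :=
  stmt_2_general n μ
end

section
/- In ℤ[x_1,…,x_N] for any number of variables N, the identity h_2^2·h_1 + h_4·h_1 − h_3·h_2 − h_3·h_1^2 = m_{(2,2,1)} + 2·m_{(2,1,1,1)} + 5·m_{(1,1,1,1,1)} holds. (This is the paper's Row 5 result for S_5: χ^{(2,2,1)} = φ^{(2,2,1)} + φ^{(4,1)} − φ^{(3,2)} − φ^{(3,1,1)} together with the Kostka column for (2,2,1).) -/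
/-!
Compare coefficients of `x^d`. Both sides are homogeneous of degree 5, and for `|d| = 5` each
coefficient on the left is a function of the shape of `d` (its multiset of nonzero exponents).
Peeling off the last factor `h₁` via `coeff_d (f * h₁) = ∑ᵢ coeff_{d - eᵢ} f` and counting the
monomials of degree 1 and 2 that divide a monomial of a given shape makes that function explicit;
it is then evaluated on the seven partitions of 5, giving the Kostka numbers on the right.
-/

open MvPolynomial Finset

/-- The partition `(4,1)` of `5`. -/
def q41 : Nat.Partition 5 := Nat.Partition.ofSums 5 {4, 1} (by decide)

/-- The partition `(3,2)` of `5`. -/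
def q32 : Nat.Partition 5 := Nat.Partition.ofSums 5 {3, 2} (by decide)

/-- The partition `(3,1,1)` of `5`. -/
def q311 : Nat.Partition 5 := Nat.Partition.ofSums 5 {3, 1, 1} (by decide)

/-- The partition `(2,2,1)` of `5`. -/
def q221 : Nat.Partition 5 := Nat.Partition.ofSums 5 {2, 2, 1} (by decide)

/-- The partition `(2,1,1,1)` of `5`. -/
def q2111 : Nat.Partition 5 := Nat.Partition.ofSums 5 {2, 1, 1, 1} (by decide)

/-- The partition `(1,1,1,1,1)` of `5`. -/
def q11111 : Nat.Partition 5 := Nat.Partition.ofSums 5 {1, 1, 1, 1, 1} (by decide)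

namespace Multiset

def removeBox (l : Multiset ℕ) (p : ℕ) : Multiset ℕ :=
  if p = 1 then l.erase p else (p - 1) ::ₘ l.erase p

-- pairs `{i, j}` of parts, where `i = j` needs a part of size at least 2
def pairCount (l : Multiset ℕ) : ℕ := (card l + 1).choose 2 - count 1 l

theorem mem_partitions_five {l : Multiset ℕ} (h0 : 0 ∉ l) (hl : l.sum = 5) :
    l ∈ ({{5}, {4, 1}, {3, 2}, {3, 1, 1}, {2, 2, 1}, {2, 1, 1, 1}, {1, 1, 1, 1, 1}} :
      Finset (Multiset ℕ)) := by
  have hcount : ∀ k, count k l * k ≤ 5 := fun k => by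
    obtain ⟨u, hu⟩ := le_iff_exists_add.1 (le_count_iff_replicate_le.1 (le_refl (count k l)))
    calc count k l * k = (replicate (count k l) k).sum := by rw [sum_replicate, smul_eq_mul]
      _ ≤ (replicate (count k l) k + u).sum := by rw [sum_add]; exact Nat.le_add_right _ _
      _ = 5 := by rw [← hu, hl]
  have hle : l ≤ {1, 1, 1, 1, 1, 2, 2, 3, 4, 5} := by
    rw [le_iff_count]
    intro k
    have hk := hcount k
    rcases Nat.lt_or_ge k 6 with hk6 | hk6
    · interval_cases k
      · simp [count_eq_zero.2 h0]
      all_goals simp; omega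
    · simp [show count k l = 0 by nlinarith]
  have key : ∀ m ∈ powerset ({1, 1, 1, 1, 1, 2, 2, 3, 4, 5} : Multiset ℕ), m.sum = 5 →
      m ∈ ({{5}, {4, 1}, {3, 2}, {3, 1, 1}, {2, 2, 1}, {2, 1, 1, 1}, {1, 1, 1, 1, 1}} :
        Finset (Multiset ℕ)) := by
    decide +kernel
  exact key l (mem_powerset.2 hle) hl

end Multiset

namespace Finsupp

variable {σ : Type*}

def shape (d : σ →₀ ℕ) : Multiset ℕ := d.support.val.map d

theorem sum_map_shape {M : Type*} [AddCommMonoid M] (d : σ →₀ ℕ) (F : ℕ → M) :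
    (d.shape.map F).sum = ∑ i ∈ d.support, F (d i) := by
  rw [shape, Multiset.map_map]
  rfl

theorem sum_shape (d : σ →₀ ℕ) : d.shape.sum = d.degree := by
  simpa [degree_apply] using sum_map_shape d id

theorem card_shape (d : σ →₀ ℕ) : Multiset.card d.shape = #d.support :=
  Multiset.card_map _ _

theorem count_shape (d : σ →₀ ℕ) (k : ℕ) : d.shape.count k = #{i ∈ d.support | d i = k} := by
  rw [shape, Multiset.count_map]
  simp_rw [eq_comm (a := k)]
  rfl

theorem zero_notMem_shape (d : σ →₀ ℕ) : 0 ∉ d.shape := by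
  simp [shape]

theorem shape_eq_cons [DecidableEq σ] {d : σ →₀ ℕ} {i : σ} (hi : i ∈ d.support) :
    d.shape = d i ::ₘ (d.support.erase i).val.map d := by
  rw [shape, ← insert_erase hi, insert_val_of_notMem (notMem_erase i _), Multiset.map_cons,
    insert_erase hi]

theorem card_toMultiset_eq_degree (d : σ →₀ ℕ) : Multiset.card (toMultiset d) = d.degree :=
  card_toMultiset d

theorem degree_toFinsupp [DecidableEq σ] (s : Multiset σ) :
    (Multiset.toFinsupp s).degree = Multiset.card s := by
  rw [← card_toMultiset_eq_degree, Multiset.toFinsupp_toMultiset]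

theorem degree_tsub_single {d : σ →₀ ℕ} {i : σ} (hi : i ∈ d.support) :
    (d - single i 1).degree = d.degree - 1 := by
  have hle : single i 1 ≤ d := single_le_iff.2 (Nat.one_le_iff_ne_zero.2 (mem_support_iff.1 hi))
  have := congrArg degree (tsub_add_cancel_of_le hle)
  rw [map_add, degree_single] at this
  omega

theorem shape_tsub_single [DecidableEq σ] {d : σ →₀ ℕ} {i : σ} (hi : i ∈ d.support) :
    (d - single i 1).shape = d.shape.removeBox (d i) := by
  set e := d - single i 1
  have he : ∀ j ≠ i, e j = d j := fun j hj => by simp [e, Ne.symm hj]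
  have hei : e i = d i - 1 := by simp [e]
  have hrest : (e.support.erase i).val.map e = (d.support.erase i).val.map d := by
    have : e.support.erase i = d.support.erase i := by
      ext j
      by_cases hj : j = i
      · simp [hj]
      · simp [hj, he j hj]
    rw [this]
    exact Multiset.map_congr rfl fun j hj => he j (ne_of_mem_erase hj)
  rw [Multiset.removeBox, shape_eq_cons hi, Multiset.erase_cons_head]
  split_ifs with h1
  · rw [shape, ← hrest]
    congr
    ext j
    by_cases hj : j = i
    · simp [hj, hei, h1]
    · simp [hj, he j hj]
  · have hie : i ∈ e.support := by
      rw [mem_support_iff, hei]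
      have := mem_support_iff.1 hi
      omega
    rw [shape_eq_cons hie, hrest, hei]

theorem single_add_single_le_iff {d : σ →₀ ℕ} {i j : σ} :
    single i 1 + single j 1 ≤ d ↔ i ∈ d.support ∧ j ∈ d.support ∧ ¬(i = j ∧ d i = 1) := by
  classical
  by_cases hij : i = j
  · subst hij
    simp only [← single_add, single_le_iff, mem_support_iff, true_and]
    omega
  · constructor
    · intro h
      have hi := h i
      have hj := h j
      simp only [add_apply, single_eq_same, single_eq_of_ne hij, single_eq_of_ne (Ne.symm hij)]
        at hi hj
      simp only [mem_support_iff, hij, false_and, not_false_eq_true, and_true]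
      omega
    · rintro ⟨hi, hj, -⟩ k
      rw [mem_support_iff] at hi hj
      simp only [add_apply, single_apply]
      split_ifs <;> subst_vars <;> simp_all <;> omega

theorem card_sym_two_toFinsupp_le [Fintype σ] [DecidableEq σ] (d : σ →₀ ℕ) :
    #{z : Sym σ 2 | Multiset.toFinsupp (z : Multiset σ) ≤ d} = d.shape.pairCount := by
  let diag : σ ↪ Sym2 σ := ⟨Sym2.diag, Sym2.diag_injective⟩
  have hsub : {i ∈ d.support | d i = 1}.map diag ⊆ d.support.sym2 :=
    fun w hw => by
      obtain ⟨i, hi, rfl⟩ := mem_map.1 hw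
      exact diag_mem_sym2_iff.2 (mem_filter.1 hi).1
  rw [Multiset.pairCount, card_shape, count_shape, ← card_sym2, ← card_map diag,
    ← card_sdiff_of_subset hsub]
  symm
  refine card_equiv (Sym2.equivSym σ) fun w => ?_
  induction w using Sym2.ind with
  | _ i j =>
    have hij : ((Sym2.equivSym σ s(i, j) : Sym σ 2) : Multiset σ) = {i, j} := rfl
    rw [mem_filter, hij, Multiset.insert_eq_cons, ← Multiset.singleton_add,
      Multiset.toFinsupp_add, Multiset.toFinsupp_singleton, Multiset.toFinsupp_singleton,
      single_add_single_le_iff]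
    simp only [mem_sdiff, mk_mem_sym2_iff, mem_map, mem_filter, mem_univ, true_and]
    simp only [diag, Function.Embedding.coeFn_mk, Sym2.diag, Sym2.eq_iff]
    aesop

end Finsupp

namespace MvPolynomial

section

variable {σ R : Type*} [CommSemiring R] [DecidableEq σ]

theorem prod_map_X_eq_monomial (s : Multiset σ) :
    (s.map X).prod = monomial (Multiset.toFinsupp s) (1 : R) := by
  induction s using Multiset.induction with
  | empty => simp
  | cons a s ih =>
    rw [Multiset.map_cons, Multiset.prod_cons, ih, ← Multiset.singleton_add,
      Multiset.toFinsupp_add, Multiset.toFinsupp_singleton, X, monomial_mul, one_mul]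

theorem coeff_sum_monomial_one {ι : Type*} [Fintype ι] {f : ι → σ →₀ ℕ}
    (hf : Function.Injective f) (d : σ →₀ ℕ) :
    coeff d (∑ i, monomial (f i) (1 : R)) = if d ∈ Set.range f then 1 else 0 := by
  classical
  simp_rw [coeff_sum, coeff_monomial]
  split_ifs with h
  · obtain ⟨i, rfl⟩ := h
    simp only [hf.eq_iff, sum_ite_eq', mem_univ, if_true]
  · exact sum_eq_zero fun j _ => if_neg fun hj => h ⟨j, hj⟩

variable [Fintype σ]

theorem hsymm_eq_sum_monomial (n : ℕ) :
    hsymm σ R n = ∑ z : Sym σ n, monomial (Multiset.toFinsupp (z : Multiset σ)) 1 := by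
  simp_rw [hsymm, prod_map_X_eq_monomial]
  rfl

theorem msymm_eq_sum_monomial {n : ℕ} (μ : n.Partition) :
    msymm σ R μ = ∑ z : {a : Sym σ n // .ofSym a = μ},
      monomial (Multiset.toFinsupp (z.1 : Multiset σ)) 1 := by
  simp_rw [msymm, prod_map_X_eq_monomial]
  rfl

theorem isHomogeneous_hsymm (n : ℕ) : (hsymm σ R n).IsHomogeneous n := by
  rw [hsymm_eq_sum_monomial]
  exact IsHomogeneous.sum _ _ _ fun z _ =>
    isHomogeneous_monomial _ (by rw [Finsupp.degree_toFinsupp, Sym.card_coe])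

theorem coeff_hsymm (n : ℕ) (d : σ →₀ ℕ) :
    coeff d (hsymm σ R n) = if d.degree = n then 1 else 0 := by
  rw [hsymm_eq_sum_monomial, coeff_sum_monomial_one
    fun z w h => Sym.coe_injective (Multiset.toFinsupp.injective h)]
  congr 1
  refine propext ⟨?_, fun h => ⟨⟨Finsupp.toMultiset d, ?_⟩, Finsupp.toMultiset_toFinsupp d⟩⟩
  · rintro ⟨z, rfl⟩
    simp [Finsupp.degree_toFinsupp]
  · rw [Finsupp.card_toMultiset_eq_degree, h]

theorem coeff_msymm {n : ℕ} (μ : n.Partition) (d : σ →₀ ℕ) :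
    coeff d (msymm σ R μ) = if d.shape = μ.parts then 1 else 0 := by
  rw [msymm_eq_sum_monomial, coeff_sum_monomial_one
    fun z w h => Subtype.val_injective (Sym.coe_injective (Multiset.toFinsupp.injective h))]
  congr 1
  refine propext ⟨?_, fun h => ?_⟩
  · rintro ⟨⟨z, hz⟩, rfl⟩
    exact congrArg Nat.Partition.parts hz
  · have hcard : Multiset.card (Finsupp.toMultiset d) = n := by
      rw [Finsupp.card_toMultiset_eq_degree, ← Finsupp.sum_shape, h, μ.parts_sum]
    refine ⟨⟨⟨Finsupp.toMultiset d, hcard⟩, Nat.Partition.ext ?_⟩,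
      Finsupp.toMultiset_toFinsupp d⟩
    change (Multiset.toFinsupp (Finsupp.toMultiset d)).shape = μ.parts
    rw [Finsupp.toMultiset_toFinsupp, h]

theorem coeff_mul_hsymm_one (f : MvPolynomial σ R) (d : σ →₀ ℕ) :
    coeff d (f * hsymm σ R 1) = ∑ i ∈ d.support, coeff (d - Finsupp.single i 1) f := by
  rw [hsymm_one, mul_sum, coeff_sum]
  simp_rw [coeff_mul_X']
  rw [sum_ite_mem, univ_inter]

theorem coeff_mul_hsymm (f : MvPolynomial σ R) (n : ℕ) (d : σ →₀ ℕ) :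
    coeff d (f * hsymm σ R n) = ∑ z : Sym σ n,
      if Multiset.toFinsupp (z : Multiset σ) ≤ d
      then coeff (d - Multiset.toFinsupp (z : Multiset σ)) f else 0 := by
  rw [hsymm_eq_sum_monomial, mul_sum, coeff_sum]
  simp_rw [coeff_mul_monomial', mul_one]

theorem coeff_hsymm_mul_hsymm_one {a : ℕ} {d : σ →₀ ℕ} (hd : d.degree = a + 1) :
    coeff d (hsymm σ R a * hsymm σ R 1) = #d.support := by
  rw [coeff_mul_hsymm_one, sum_congr rfl fun i hi => by
    rw [coeff_hsymm, if_pos (by rw [Finsupp.degree_tsub_single hi]; omega)]]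
  simp

theorem coeff_hsymm_mul_hsymm {a b : ℕ} {d : σ →₀ ℕ} (hd : d.degree = a + b) :
    coeff d (hsymm σ R a * hsymm σ R b) =
      #{z : Sym σ b | Multiset.toFinsupp (z : Multiset σ) ≤ d} := by
  rw [coeff_mul_hsymm, card_filter, Nat.cast_sum]
  refine sum_congr rfl fun z _ => ?_
  split_ifs with h
  · have := congrArg Finsupp.degree (tsub_add_cancel_of_le h)
    rw [map_add, Finsupp.degree_toFinsupp, Sym.card_coe] at this
    rw [coeff_hsymm, if_pos (by omega), Nat.cast_one]
  · rw [Nat.cast_zero]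

theorem coeff_hsymm_mul_hsymm_two {a : ℕ} {d : σ →₀ ℕ} (hd : d.degree = a + 2) :
    coeff d (hsymm σ R a * hsymm σ R 2) = d.shape.pairCount := by
  rw [coeff_hsymm_mul_hsymm hd, Finsupp.card_sym_two_toFinsupp_le]

end

variable (σ R : Type*) [Fintype σ] [DecidableEq σ] [CommRing R]

/-- The Jacobi–Trudi determinant `det (h_{λᵢ - i + j})` for `λ = (2,2,1)`. -/
noncomputable def jacobiTrudi221 : MvPolynomial σ R :=
  hsymm σ R 2 ^ 2 * hsymm σ R 1 + hsymm σ R 4 * hsymm σ R 1 - hsymm σ R 3 * hsymm σ R 2 -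
    hsymm σ R 3 * hsymm σ R 1 ^ 2

theorem isHomogeneous_jacobiTrudi221 : (jacobiTrudi221 σ R).IsHomogeneous 5 := by
  have h := isHomogeneous_hsymm (σ := σ) (R := R)
  exact ((((h 2).pow 2).mul (h 1)).add ((h 4).mul (h 1))).sub ((h 3).mul (h 2)) |>.sub
    ((h 3).mul ((h 1).pow 2))

variable {σ R}

theorem coeff_jacobiTrudi221 {d : σ →₀ ℕ} (hd : d.degree = 5) :
    coeff d (jacobiTrudi221 σ R) =
      (d.shape.map fun p =>
          ((d.shape.removeBox p).pairCount - Multiset.card (d.shape.removeBox p) : R)).sum +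
        Multiset.card d.shape - d.shape.pairCount := by
  have hpeel : jacobiTrudi221 σ R =
      (hsymm σ R 2 * hsymm σ R 2 - hsymm σ R 3 * hsymm σ R 1) * hsymm σ R 1 +
        hsymm σ R 4 * hsymm σ R 1 - hsymm σ R 3 * hsymm σ R 2 := by
    rw [jacobiTrudi221]
    ring
  rw [hpeel, coeff_sub, coeff_add, coeff_mul_hsymm_one, coeff_hsymm_mul_hsymm_one hd,
    coeff_hsymm_mul_hsymm_two hd, Finsupp.sum_map_shape, Finsupp.card_shape]
  congr 2
  refine sum_congr rfl fun i hi => ?_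
  have hdi : (d - Finsupp.single i 1).degree = 4 := by
    rw [Finsupp.degree_tsub_single hi, hd]
  rw [coeff_sub, coeff_hsymm_mul_hsymm_two hdi, coeff_hsymm_mul_hsymm_one hdi,
    ← Finsupp.card_shape, Finsupp.shape_tsub_single hi]

end MvPolynomial

theorem stmt_15 (N : ℕ) :
    hsymm (Fin N) ℤ 2 ^ 2 * hsymm (Fin N) ℤ 1 + hsymm (Fin N) ℤ 4 * hsymm (Fin N) ℤ 1 -
        hsymm (Fin N) ℤ 3 * hsymm (Fin N) ℤ 2 - hsymm (Fin N) ℤ 3 * hsymm (Fin N) ℤ 1 ^ 2 =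
      msymm (Fin N) ℤ q221 + 2 * msymm (Fin N) ℤ q2111 + 5 * msymm (Fin N) ℤ q11111 := by
  change jacobiTrudi221 (Fin N) ℤ = _
  ext d
  rw [← map_ofNat C 2, ← map_ofNat C 5, coeff_add, coeff_add, coeff_C_mul, coeff_C_mul,
    coeff_msymm, coeff_msymm, coeff_msymm]
  by_cases hd : d.degree = 5
  · rw [coeff_jacobiTrudi221 hd]
    have := Multiset.mem_partitions_five d.zero_notMem_shape (by rw [Finsupp.sum_shape, hd])
    generalize d.shape = l at this ⊢
    simp only [mem_insert, mem_singleton] at this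
    rcases this with rfl | rfl | rfl | rfl | rfl | rfl | rfl <;> decide
  · have hμ : ∀ μ : Nat.Partition 5, d.shape ≠ μ.parts := fun μ h =>
      hd (by rw [← Finsupp.sum_shape, h, μ.parts_sum])
    simp [(isHomogeneous_jacobiTrudi221 _ _).coeff_eq_zero hd, hμ]
end
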